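/- Let 0 < α < 1 and let T : [0,∞) → ℝ be continuously differentiable with T(0) = 0. If (CF D^α T)(t) = 0 for all t ≥ 0, where (CF D^α T)(t) = (1/(1-α)) ∫₀ᵗ T'(s) e^{-(α/(1-α))(t-s)} ds, then T(t) = 0 for all t ≥ 0. -/

import Mathlib

open Real

/-!
Since `e^{-λ(t-s)} = e^{-λt} e^{λs}`, the Caputo–Fabrizio condition says that
`∫₀ᵗ T'(s) e^{λs} ds = 0` for every `t ≥ 0`. Differentiating in `t` gives `T'(t) e^{λt} = 0`,
so `T' = 0` on `[0, ∞)` and `T` is constant there, equal to `T(0) = 0`.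
-/

section IntervalIntegral

variable {E : Type*} [NormedAddCommGroup E] [NormedSpace ℝ E] [CompleteSpace E]

theorem Continuous.eqOn_zero_of_forall_integral_eq_zero {f : ℝ → E} (hf : Continuous f) {a : ℝ}
    (h : ∀ t, a ≤ t → ∫ s in a..t, f s = 0) : Set.EqOn f 0 (Set.Ici a) := by
  have hIoi : Set.EqOn f 0 (Set.Ioi a) := fun t ht => by
    have hconst : (fun u => ∫ s in a..u, f s) =ᶠ[nhds t] fun _ => 0 := by
      filter_upwards [eventually_gt_nhds ht] with u hu using h u hu.le
    exact (hf.integral_hasStrictDerivAt a t).hasDerivAt.unique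
      ((hasDerivAt_const t 0).congr_of_eventuallyEq hconst)
  simpa only [closure_Ioi] using hIoi.closure hf continuous_const

end IntervalIntegral

theorem intervalIntegral.integral_mul_exp_neg_mul_sub (g : ℝ → ℝ) (lam a t : ℝ) :
    ∫ s in a..t, g s * exp (-lam * (t - s)) = exp (-lam * t) * ∫ s in a..t, g s * exp (lam * s) := by
  rw [← intervalIntegral.integral_const_mul]
  congr 1 with s
  rw [show -lam * (t - s) = -lam * t + lam * s by ring, exp_add]
  ring

theorem eqOn_of_deriv_eq_zero_Ici {f : ℝ → ℝ} (hf : Differentiable ℝ f) {a : ℝ}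
    (hderiv : Set.EqOn (deriv f) 0 (Set.Ici a)) : Set.EqOn f (fun _ => f a) (Set.Ici a) :=
  fun t ht => constant_of_has_deriv_right_zero hf.continuous.continuousOn
    (fun x hx => by simpa [hderiv (Set.mem_Ici.2 hx.1)] using (hf x).hasDerivAt.hasDerivWithinAt)
    t ⟨ht, le_rfl⟩

theorem cf_kernel_trivial_general (α : ℝ) (hα1 : α < 1)
    (T : ℝ → ℝ) (hT : ContDiff ℝ 1 T) (hT0 : T 0 = 0)
    (hcf : ∀ t : ℝ, 0 ≤ t →
      (1 / (1 - α)) * ∫ s in (0:ℝ)..t, deriv T s * Real.exp (-(α / (1 - α)) * (t - s)) = 0) :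
    ∀ t : ℝ, 0 ≤ t → T t = 0 := by
  set lam := α / (1 - α)
  have hweighted : ∀ t, 0 ≤ t → ∫ s in (0:ℝ)..t, deriv T s * exp (lam * s) = 0 := fun t ht => by
    have h := hcf t ht
    rw [intervalIntegral.integral_mul_exp_neg_mul_sub] at h
    have h1α : 1 - α ≠ 0 := sub_ne_zero.2 hα1.ne'
    simpa [h1α, exp_ne_zero] using h
  have hcont : Continuous fun s => deriv T s * exp (lam * s) := by
    have := hT.continuous_deriv le_rfl
    fun_prop
  have hderiv : Set.EqOn (deriv T) 0 (Set.Ici 0) := fun t ht => by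
    simpa [exp_ne_zero] using hcont.eqOn_zero_of_forall_integral_eq_zero hweighted ht
  intro t ht
  rw [eqOn_of_deriv_eq_zero_Ici (hT.differentiable one_ne_zero) hderiv ht, hT0]

theorem cf_kernel_trivial (α : ℝ) (hα0 : 0 < α) (hα1 : α < 1)
    (T : ℝ → ℝ) (hT : ContDiff ℝ 1 T) (hT0 : T 0 = 0)
    (hcf : ∀ t : ℝ, 0 ≤ t →
      (1 / (1 - α)) * ∫ s in (0:ℝ)..t, deriv T s * Real.exp (-(α / (1 - α)) * (t - s)) = 0) :
    ∀ t : ℝ, 0 ≤ t → T t = 0 :=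
  cf_kernel_trivial_general α hα1 T hT hT0 hcf
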